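/- arXiv:1912.12752 — 7 statements merged into one kernel-verified Lean document; each statement's English description precedes it below -/
import Mathlib

section
/- Let G;C be an instance of the general Grundy domination problem and t a positive integer with t ≤ γ_gr(G;C). Let δ_t be the minimum of |∪_{i=1}^t N⟨v_i⟩| over all legal sequences (v_1,…,v_t). Then γ_gr(G;C) ≤ n − δ_t + t. -/
/-- The neighborhood `N⟨v⟩`: closed neighborhood if `v ∈ C`, open neighborhood otherwise. -/
def gnbr {V : Type*} (G : SimpleGraph V) (C : Set V) (v : V) : Set V :=
  {u | G.Adj v u ∨ (v ∈ C ∧ u = v)}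

/-- A legal sequence of `G;C`: distinct vertices, each element after the first
footprints a vertex not covered by the neighborhoods of its predecessors. -/
def Legal {V : Type*} (G : SimpleGraph V) (C : Set V) (l : List V) : Prop :=
  l.Nodup ∧ ∀ i (hi : i < l.length), 0 < i →
    ((gnbr G C (l.get ⟨i, hi⟩)) \
      ⋃ j : Fin i, gnbr G C (l.get ⟨j, lt_trans j.2 hi⟩)).Nonempty

/-- A sequence is dominating if the neighborhoods of its vertices cover all of `V`. -/
def Dominating {V : Type*} (G : SimpleGraph V) (C : Set V) (l : List V) : Prop :=
  ∀ u, ∃ v ∈ l, u ∈ gnbr G C v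

/-- The general Grundy domination number: maximum length of a legal sequence. -/
noncomputable def grundy {V : Type*} [Fintype V] (G : SimpleGraph V) (C : Set V) : ℕ :=
  sSup {k | ∃ l : List V, Legal G C l ∧ l.length = k}

lemma legal_take {V : Type*} (G : SimpleGraph V) (C : Set V) {l : List V}
    (h : Legal G C l) (n : ℕ) : Legal G C (l.take n) := by
  obtain ⟨hnd, hleg⟩ := h
  refine ⟨hnd.sublist (List.take_sublist n l), ?_⟩
  intro i hi hpos
  have hi' : i < l.length := lt_of_lt_of_le hi (by simp [List.length_take])
  have key := hleg i hi' hpos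
  have e1 : (l.take n).get ⟨i, hi⟩ = l.get ⟨i, hi'⟩ := by
    simp [List.get_eq_getElem, List.getElem_take]
  have e2 : (⋃ j : Fin i, gnbr G C ((l.take n).get ⟨j, lt_trans j.2 hi⟩)) =
      ⋃ j : Fin i, gnbr G C (l.get ⟨j, lt_trans j.2 hi'⟩) := by
    refine Set.iUnion_congr fun j => ?_
    congr 1
    simp [List.get_eq_getElem, List.getElem_take]
  rw [e1, e2]
  exact key

lemma exists_max_legal {V : Type*} [Fintype V] (G : SimpleGraph V) (C : Set V) :
    ∃ l : List V, Legal G C l ∧ l.length = grundy G C := by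
  have hne : {k | ∃ l : List V, Legal G C l ∧ l.length = k}.Nonempty :=
    ⟨0, [], ⟨List.nodup_nil, fun i hi _ => by simp at hi⟩, rfl⟩
  have hbdd : BddAbove {k | ∃ l : List V, Legal G C l ∧ l.length = k} :=
    ⟨Fintype.card V, fun k ⟨l, hl, hk⟩ => hk ▸ hl.1.length_le_card⟩
  exact Nat.sSup_mem hne hbdd

theorem stmt2 {V : Type*} [Fintype V] (G : SimpleGraph V) (C : Set V)
    (hiso : ∀ v ∉ C, ∃ u, G.Adj v u)
    (t : ℕ) (ht : 0 < t) (htg : t ≤ grundy G C) :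
    grundy G C ≤ Fintype.card V -
      sInf {m | ∃ l : List V, Legal G C l ∧ l.length = t ∧
        (⋃ v ∈ l, gnbr G C v).ncard = m} + t := by
  obtain ⟨l, hl, hlen⟩ := exists_max_legal G C
  rw [← hlen] at htg ⊢
  set U : Set V := ⋃ v ∈ l.take t, gnbr G C v with hUdef
  have hUmem : U.ncard ∈ {m | ∃ l : List V, Legal G C l ∧ l.length = t ∧
      (⋃ v ∈ l, gnbr G C v).ncard = m} :=
    ⟨l.take t, legal_take G C hl t, by simp [List.length_take]; omega, rfl⟩
  have hδ : sInf {m | ∃ l : List V, Legal G C l ∧ l.length = t ∧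
      (⋃ v ∈ l, gnbr G C v).ncard = m} ≤ U.ncard := Nat.sInf_le hUmem
  -- witnesses
  have hwit : ∀ j : Fin (l.length - t),
      ((gnbr G C (l.get ⟨t + j.1, by have := j.2; omega⟩)) \
        ⋃ m : Fin (t + j.1), gnbr G C
          (l.get ⟨m, lt_trans m.2 (by have := j.2; omega)⟩)).Nonempty :=
    fun j => hl.2 (t + j.1) (by have := j.2; omega) (by omega)
  choose f hf using hwit
  have hfU : ∀ j, f j ∉ U := by
    intro j hj
    rw [hUdef, Set.mem_iUnion₂] at hj
    obtain ⟨v, hv, hfv⟩ := hj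
    obtain ⟨m, hm, hvm⟩ := List.mem_iff_getElem.mp hv
    have hmt : m < t + j.1 := by
      have := List.length_take_le t l
      simp [List.length_take] at hm
      omega
    refine (hf j).2 (Set.mem_iUnion.mpr ⟨⟨m, hmt⟩, ?_⟩)
    have : v = l.get ⟨m, lt_trans hmt (by have := j.2; omega)⟩ := by
      rw [← hvm]
      simp [List.get_eq_getElem, List.getElem_take]
    rwa [← this]
  have key : ∀ j j' : Fin (l.length - t), j.1 < j'.1 → f j ≠ f j' := by
    intro j j' hlt heq
    refine (hf j').2 (Set.mem_iUnion.mpr ⟨⟨t + j.1, by omega⟩, ?_⟩)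
    have h1 := (hf j).1
    rw [heq] at h1
    exact h1
  have hinj : Function.Injective f := by
    intro j j' heq
    by_contra hne
    rcases lt_trichotomy j.1 j'.1 with h | h | h
    · exact key j j' h heq
    · exact hne (Fin.ext h)
    · exact key j' j h heq.symm
  -- counting
  have hcard : l.length - t ≤ (Uᶜ).ncard := by
    have : Function.Injective (fun j : Fin (l.length - t) => (⟨f j, hfU j⟩ : ↥(Uᶜ))) := by
      intro a b hab
      exact hinj (congrArg Subtype.val hab)
    have hle := Nat.card_le_card_of_injective _ this
    rw [Nat.card_coe_set_eq] at hle
    simpa [Nat.card_eq_fintype_card, Nat.card_coe_set_eq] using hle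
  have hsum : U.ncard + (Uᶜ).ncard = Fintype.card V := by
    rw [Set.ncard_add_ncard_compl, Nat.card_eq_fintype_card]
  omega
end

section
/- If u and v are twin vertices in G;C (i.e., N⟨u⟩ = N⟨v⟩), then γ_gr(G;C) = γ_gr(G − v; C \ {v}). -/
lemma gnbr_induce {V : Type*} (G : SimpleGraph V) (C : Set V) (s : Set V) (a : s) :
    gnbr (SimpleGraph.induce s G) {x : s | (x : V) ∈ C} a = Subtype.val ⁻¹' gnbr G C ↑a := by
  ext b
  simp only [gnbr, Set.mem_setOf_eq, Set.mem_preimage]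
  constructor
  · rintro (h | ⟨h1, h2⟩)
    · exact Or.inl h
    · exact Or.inr ⟨h1, by rw [h2]⟩
  · rintro (h | ⟨h1, h2⟩)
    · exact Or.inl h
    · exact Or.inr ⟨h1, Subtype.ext h2⟩

lemma legal_backward {V : Type*} (G : SimpleGraph V) (C : Set V) (s : Set V)
    {l' : List s} (hL : Legal (SimpleGraph.induce s G) {x : s | (x : V) ∈ C} l') :
    Legal G C (l'.map Subtype.val) := by
  constructor
  · exact hL.1.map Subtype.val_injective
  · intro i hi hpos
    have hi' : i < l'.length := by simpa using hi
    obtain ⟨w, hw1, hw2⟩ := hL.2 i hi' hpos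
    rw [gnbr_induce] at hw1
    have hget : ∀ (k : ℕ) (hk : k < (l'.map Subtype.val).length) (hk' : k < l'.length),
        (l'.map Subtype.val).get ⟨k, hk⟩ = ↑(l'.get ⟨k, hk'⟩) := by
      intro k hk hk'; simp only [List.get_eq_getElem, List.getElem_map]
    refine ⟨↑w, ?_, ?_⟩
    · rw [hget i hi hi']; exact hw1
    · intro hmem
      apply hw2
      simp only [Set.mem_iUnion] at hmem ⊢
      obtain ⟨j, hj⟩ := hmem
      rw [hget j.1 (lt_trans j.2 hi) (lt_trans j.2 hi')] at hj
      exact ⟨j, by rw [gnbr_induce]; exact hj⟩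

lemma legal_get_gnbr_ne {V : Type*} {G : SimpleGraph V} {C : Set V} {l : List V}
    (hL : Legal G C l) {i j : Fin l.length} (hij : (i : ℕ) < j) :
    gnbr G C (l.get i) ≠ gnbr G C (l.get j) := by
  intro heq
  obtain ⟨w, hw1, hw2⟩ := hL.2 j.1 j.2 (Nat.lt_of_le_of_lt (Nat.zero_le _) hij)
  apply hw2
  simp only [Set.mem_iUnion]
  refine ⟨⟨i.1, hij⟩, ?_⟩
  have hg : l.get ⟨(⟨i.1, hij⟩ : Fin j.1).1, lt_trans (⟨i.1, hij⟩ : Fin j.1).2 j.2⟩ = l.get i := by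
    congr 1
  rw [hg, heq]
  have : l.get ⟨j.1, j.2⟩ = l.get j := by congr 1
  rw [this] at hw1
  exact hw1

lemma legal_twin_not_mem {V : Type*} {G : SimpleGraph V} {C : Set V} {u v : V} (huv : u ≠ v)
    (htwin : gnbr G C u = gnbr G C v) {l : List V} (hL : Legal G C l) (hu : u ∈ l) : v ∉ l := by
  intro hv
  obtain ⟨i, hi⟩ := List.mem_iff_get.mp hu
  obtain ⟨j, hj⟩ := List.mem_iff_get.mp hv
  have hij : (i : ℕ) ≠ (j : ℕ) := by
    intro h
    apply huv
    rw [← hi, ← hj]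
    congr 1
    exact Fin.ext h
  rcases Nat.lt_or_ge i.1 j.1 with h | h
  · exact legal_get_gnbr_ne hL h (by rw [hi, hj, htwin])
  · have h' : (j : ℕ) < i := lt_of_le_of_ne h (fun a => hij a.symm)
    exact legal_get_gnbr_ne hL h' (by rw [hi, hj, htwin])

lemma gnbr_swap_eq {V : Type*} [DecidableEq V] (G : SimpleGraph V) (C : Set V) {u v : V}
    (htwin : gnbr G C u = gnbr G C v) (x : V) :
    gnbr G C (Equiv.swap u v x) = gnbr G C x := by
  rcases eq_or_ne x u with rfl | hu
  · rw [Equiv.swap_apply_left]; exact htwin.symm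
  rcases eq_or_ne x v with rfl | hv
  · rw [Equiv.swap_apply_right]; exact htwin
  · rw [Equiv.swap_apply_of_ne_of_ne hu hv]

lemma legal_map {V : Type*} (G : SimpleGraph V) (C : Set V) (f : V → V)
    (hf : Function.Injective f) (hg : ∀ x, gnbr G C (f x) = gnbr G C x)
    {l : List V} (hL : Legal G C l) : Legal G C (l.map f) := by
  constructor
  · exact hL.1.map hf
  · intro i hi hpos
    have hi' : i < l.length := by simpa using hi
    obtain ⟨w, hw1, hw2⟩ := hL.2 i hi' hpos
    refine ⟨w, ?_, ?_⟩
    · have : (l.map f).get ⟨i, hi⟩ = f (l.get ⟨i, hi'⟩) := by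
        simp only [List.get_eq_getElem, List.getElem_map]
      rw [this, hg]; exact hw1
    · intro hmem
      apply hw2
      simp only [Set.mem_iUnion] at hmem ⊢
      obtain ⟨j, hj⟩ := hmem
      refine ⟨j, ?_⟩
      have : (l.map f).get ⟨j.1, lt_trans j.2 hi⟩ = f (l.get ⟨j.1, lt_trans j.2 hi'⟩) := by
        simp only [List.get_eq_getElem, List.getElem_map]
      rw [this, hg] at hj
      exact hj

lemma twin_mem_iff' {V : Type*} {G : SimpleGraph V} {C : Set V} {u v : V} (huv : u ≠ v)
    (htwin : gnbr G C u = gnbr G C v) {x : V} (hx : x ≠ v) :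
    u ∈ gnbr G C x ↔ v ∈ gnbr G C x := by
  constructor
  · rintro (hadj | ⟨hxC, hux⟩)
    · have h1 : x ∈ gnbr G C u := Or.inl hadj.symm
      rw [htwin] at h1
      rcases h1 with h2 | ⟨_, h3⟩
      · exact Or.inl h2.symm
      · exact absurd h3 hx
    · subst hux
      have h1 : u ∈ gnbr G C u := Or.inr ⟨hxC, rfl⟩
      rw [htwin] at h1
      rcases h1 with h2 | ⟨_, h3⟩
      · exact Or.inl h2.symm
      · exact absurd h3 huv
  · rintro (hadj | ⟨_, h3⟩)
    · have h1 : x ∈ gnbr G C v := Or.inl hadj.symm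
      rw [← htwin] at h1
      rcases h1 with h2 | ⟨huC, h4⟩
      · exact Or.inl h2.symm
      · subst h4; exact Or.inr ⟨huC, rfl⟩
    · exact absurd h3.symm hx

lemma legal_forward {V : Type*} {G : SimpleGraph V} {C : Set V} {u v : V}
    (huv : u ≠ v) (htwin : gnbr G C u = gnbr G C v)
    {l : List V} (hL : Legal G C l) (hvl : v ∉ l) :
    ∃ l' : List {x : V | x ≠ v},
      Legal (SimpleGraph.induce {x | x ≠ v} G) {x | (x : V) ∈ C} l' ∧ l'.length = l.length := by
  have hne : ∀ x ∈ l, x ∈ {x : V | x ≠ v} := fun x hx h => hvl (h ▸ hx)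
  refine ⟨l.pmap (fun x h => ⟨x, h⟩) hne, ⟨?_, ?_⟩, List.length_pmap⟩
  · exact hL.1.pmap (fun a ha b hb h => congrArg Subtype.val h)
  · intro i hi hpos
    have hi' : i < l.length := by simpa [List.length_pmap] using hi
    obtain ⟨w, hw1, hw2⟩ := hL.2 i hi' hpos
    have hget : ∀ (k : ℕ) (hk : k < (l.pmap (fun x h => (⟨x, h⟩ : {x : V | x ≠ v})) hne).length)
        (hk' : k < l.length),
        ((l.pmap (fun x h => (⟨x, h⟩ : {x : V | x ≠ v})) hne).get ⟨k, hk⟩ : V) = l.get ⟨k, hk'⟩ := by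
      intro k hk hk'; simp [List.get_eq_getElem, List.getElem_pmap]
    classical
    set w₀ : V := if w = v then u else w with hw₀
    have hw₀v : w₀ ≠ v := by
      by_cases h : w = v
      · simpa [hw₀, h] using huv
      · simpa [hw₀, h] using h
    have key : ∀ x : V, x ≠ v → (w₀ ∈ gnbr G C x ↔ w ∈ gnbr G C x) := by
      intro x hx
      by_cases h : w = v
      · rw [hw₀, if_pos h, h]
        exact twin_mem_iff' huv htwin hx
      · rw [hw₀, if_neg h]
    refine ⟨⟨w₀, hw₀v⟩, ?_, ?_⟩
    · rw [gnbr_induce, Set.mem_preimage, hget i hi hi']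
      exact (key _ (hne _ (l.get_mem _))).mpr hw1
    · intro hmem
      apply hw2
      simp only [Set.mem_iUnion] at hmem ⊢
      obtain ⟨j, hj⟩ := hmem
      rw [gnbr_induce, Set.mem_preimage, hget j.1 _ (lt_trans j.2 hi')] at hj
      exact ⟨j, (key _ (hne _ (l.get_mem _))).mp hj⟩

theorem stmt3 {V : Type*} [Fintype V] [DecidableEq V] (G : SimpleGraph V) (C : Set V)
    (hiso : ∀ w ∉ C, ∃ x, G.Adj w x)
    (u v : V) (huv : u ≠ v) (htwin : gnbr G C u = gnbr G C v) :
    grundy G C = grundy (SimpleGraph.induce {x | x ≠ v} G) {x | (x : V) ∈ C} := by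
  have key : {k | ∃ l : List V, Legal G C l ∧ l.length = k} =
      {k | ∃ l' : List {x : V | x ≠ v},
        Legal (SimpleGraph.induce {x | x ≠ v} G) {x | (x : V) ∈ C} l' ∧ l'.length = k} := by
    ext k
    simp only [Set.mem_setOf_eq]
    constructor
    · rintro ⟨l, hL, hlen⟩
      by_cases hvl : v ∈ l
      · have hul : u ∉ l := fun hu => legal_twin_not_mem huv htwin hL hu hvl
        have hL₂ : Legal G C (l.map (Equiv.swap u v)) :=
          legal_map G C _ (Equiv.injective _) (gnbr_swap_eq G C htwin) hL
        have hv₂ : v ∉ l.map (Equiv.swap u v) := by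
          intro h
          obtain ⟨x, hx, hfx⟩ := List.mem_map.mp h
          have : x = u := by
            apply (Equiv.swap u v).injective
            rw [hfx, Equiv.swap_apply_left]
          exact hul (this ▸ hx)
        obtain ⟨l', h1, h2⟩ := legal_forward huv htwin hL₂ hv₂
        exact ⟨l', h1, by rw [h2, List.length_map, hlen]⟩
      · obtain ⟨l', h1, h2⟩ := legal_forward huv htwin hL hvl
        exact ⟨l', h1, by rw [h2, hlen]⟩
    · rintro ⟨l', hL', hlen⟩
      exact ⟨l'.map Subtype.val, legal_backward G C _ hL', by rw [List.length_map, hlen]⟩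
  unfold grundy
  rw [key]
end

section
/- Let n ≥ 3, G = P_n, and C ⊆ V(G). The sequence (1,2,…,n−1) is a legal dominating sequence of G;C, and hence γ_gr(P_n;C) ≥ n − 1. -/
theorem stmt6 (n : ℕ) (hn : 3 ≤ n) (C : Set (Fin n)) :
    Legal (SimpleGraph.pathGraph n) C
      (List.ofFn (fun i : Fin (n - 1) => Fin.castLE (by omega) i)) ∧
    Dominating (SimpleGraph.pathGraph n) C
      (List.ofFn (fun i : Fin (n - 1) => Fin.castLE (by omega) i)) ∧
    n - 1 ≤ grundy (SimpleGraph.pathGraph n) C := by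
  have hlen : (List.ofFn (fun i : Fin (n - 1) => Fin.castLE (by omega : n - 1 ≤ n) i)).length = n - 1 := by
    simp
  have hget : ∀ (i : ℕ) (hi : i < (List.ofFn (fun i : Fin (n - 1) => Fin.castLE (by omega : n - 1 ≤ n) i)).length),
      ((List.ofFn (fun i : Fin (n - 1) => Fin.castLE (by omega : n - 1 ≤ n) i)).get ⟨i, hi⟩ : Fin n).val = i := by
    intro i hi
    simp [List.get_ofFn]
  have hleg : Legal (SimpleGraph.pathGraph n) C
      (List.ofFn (fun i : Fin (n - 1) => Fin.castLE (by omega : n - 1 ≤ n) i)) := by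
    constructor
    · apply List.nodup_ofFn.mpr
      intro a b h
      exact Fin.castLE_injective _ h
    · intro i hi hpos
      have hi' : i < n - 1 := by simpa [hlen] using hi
      refine ⟨⟨i + 1, by omega⟩, ?_, ?_⟩
      · left
        rw [SimpleGraph.pathGraph_adj]
        left
        simp [hget i hi]
      · intro hmem
        simp only [Set.mem_iUnion] at hmem
        obtain ⟨j, hj⟩ := hmem
        have hjv := hget j (lt_trans j.2 hi)
        rcases hj with h | ⟨_, h⟩
        · rw [SimpleGraph.pathGraph_adj] at h
          have hj2 : (j : ℕ) < i := j.2
          simp [hjv] at h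
          omega
        · have : i + 1 = (j : ℕ) := by
            have := congrArg Fin.val h
            simpa [hjv] using this
          have := j.2; omega
  refine ⟨hleg, ?_, ?_⟩
  · intro u
    by_cases hu : (u : ℕ) = 0
    · refine ⟨⟨1, by omega⟩, ?_, ?_⟩
      · rw [List.mem_ofFn]
        exact ⟨⟨1, by omega⟩, rfl⟩
      · left
        rw [SimpleGraph.pathGraph_adj]
        right; simp [hu]
    · refine ⟨⟨(u : ℕ) - 1, by omega⟩, ?_, ?_⟩
      · rw [List.mem_ofFn]
        refine ⟨⟨(u : ℕ) - 1, by omega⟩, ?_⟩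
        ext; simp
      · left
        rw [SimpleGraph.pathGraph_adj]
        left; simp; omega
  · have hmem : n - 1 ∈ {k | ∃ l : List (Fin n), Legal (SimpleGraph.pathGraph n) C l ∧ l.length = k} :=
      ⟨_, hleg, hlen⟩
    apply le_csSup _ hmem
    refine ⟨n, ?_⟩
    rintro k ⟨l, ⟨hnd, _⟩, rfl⟩
    calc l.length ≤ Fintype.card (Fin n) := List.Nodup.length_le_card hnd
    _ = n := by simp
end

section
/- Let n ≥ 3, G = P_n, C ⊆ V(P_n). If C is a good configuration for P_n with 1 ∉ C and C∩{3,…,n} a gconf for the subpath on {3,…,n}, and S is a legal dominating sequence of that subpath of length n−2, then (1, S, 2) is a legal dominating sequence of P_n of length n. -/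
/-- Good configuration for the path on vertices `1,…,n` (as a subset of `ℕ`). -/
def gconf : ℕ → Set ℕ → Prop
  | 0, _ => False
  | 1, C => 1 ∈ C
  | 2, C => ¬(1 ∈ C ∧ 2 ∈ C)
  | (n + 3), C =>
      (1 ∉ C ∧ gconf (n + 1) {i | i + 2 ∈ C}) ∨ ((n + 3) ∉ C ∧ gconf (n + 1) C)

section helpers

variable {n : ℕ} {C : Set (Fin n)}

lemma gnbr_path_mem {x u : Fin n} :
    u ∈ gnbr (SimpleGraph.pathGraph n) C x ↔
      (((x:ℕ)+1 = u ∨ (u:ℕ)+1 = x) ∨ (x ∈ C ∧ u = x)) := by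
  simp [gnbr, SimpleGraph.pathGraph_adj]

lemma induce_path_adj {x u : {v : Fin n | 2 ≤ (v:ℕ)}} :
    (SimpleGraph.induce {v : Fin n | 2 ≤ (v : ℕ)} (SimpleGraph.pathGraph n)).Adj x u ↔
      (SimpleGraph.pathGraph n).Adj (x : Fin n) (u : Fin n) := by
  simp [SimpleGraph.comap_adj]

lemma gnbr_ind_mem {x u : {v : Fin n | 2 ≤ (v:ℕ)}} :
    u ∈ gnbr (SimpleGraph.induce {v : Fin n | 2 ≤ (v : ℕ)} (SimpleGraph.pathGraph n))
        {x | (x : Fin n) ∈ C} x ↔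
      (u : Fin n) ∈ gnbr (SimpleGraph.pathGraph n) C (x : Fin n) := by
  simp only [gnbr, Set.mem_setOf_eq, induce_path_adj]
  constructor
  · rintro (h | ⟨h1, h2⟩)
    · left; exact h
    · right; exact ⟨h1, by rw [h2]⟩
  · rintro (h | ⟨h1, h2⟩)
    · left; exact h
    · right; exact ⟨h1, Subtype.ext h2⟩

end helpers
set_option maxHeartbeats 1000000 in
theorem stmt8 (n : ℕ) (hn : 3 ≤ n) (C : Set (Fin n))
    (h1 : (⟨0, by omega⟩ : Fin n) ∉ C)
    (hgc : gconf (n - 2)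
      ((fun v : Fin n => (v : ℕ) - 1) '' (C ∩ {v : Fin n | 2 ≤ (v : ℕ)})))
    (S : List ({v : Fin n | 2 ≤ (v : ℕ)} : Set (Fin n)))
    (hSlegal : Legal (SimpleGraph.induce {v : Fin n | 2 ≤ (v : ℕ)} (SimpleGraph.pathGraph n))
      {x | (x : Fin n) ∈ C} S)
    (hSdom : Dominating (SimpleGraph.induce {v : Fin n | 2 ≤ (v : ℕ)} (SimpleGraph.pathGraph n))
      {x | (x : Fin n) ∈ C} S)
    (hSlen : S.length = n - 2) :
    Legal (SimpleGraph.pathGraph n) C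
      ((⟨0, by omega⟩ : Fin n) :: (S.map Subtype.val ++ [⟨1, by omega⟩])) ∧
    Dominating (SimpleGraph.pathGraph n) C
      ((⟨0, by omega⟩ : Fin n) :: (S.map Subtype.val ++ [⟨1, by omega⟩])) ∧
    ((⟨0, by omega⟩ : Fin n) :: (S.map Subtype.val ++ [⟨1, by omega⟩])).length = n := by
  classical
  have hMlen : (S.map Subtype.val).length = S.length := by simp
  have hmemM : ∀ x ∈ S.map Subtype.val, 2 ≤ (x : ℕ) := by
    intro x hx
    simp only [List.mem_map] at hx
    obtain ⟨y, _, rfl⟩ := hx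
    exact y.2
  -- nothing with value ≥ 2 is in the gnbr of vertex 0
  have hnot0 : ∀ u : Fin n, 2 ≤ (u : ℕ) →
      u ∉ gnbr (SimpleGraph.pathGraph n) C (⟨0, by omega⟩ : Fin n) := by
    intro u hu h
    rw [gnbr_path_mem] at h
    rcases h with (h | h) | ⟨-, he⟩
    · simp only [Fin.val_mk] at h; omega
    · simp only [Fin.val_mk] at h; omega
    · rw [he] at hu; simp at hu
  -- vertex 0 is in nobody's gnbr among vertices ≥ 2
  have hnotS : ∀ s : Fin n, 2 ≤ (s : ℕ) →
      (⟨0, by omega⟩ : Fin n) ∉ gnbr (SimpleGraph.pathGraph n) C s := by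
    intro s hs h
    rw [gnbr_path_mem] at h
    rcases h with (h | h) | ⟨-, he⟩
    · simp only [Fin.val_mk] at h; omega
    · simp only [Fin.val_mk] at h; omega
    · have := congrArg Fin.val he; simp only [Fin.val_mk] at this; omega
  -- witness lemma within the subgraph
  have hwit : ∀ k (hk : k < S.length), ∃ w,
      w ∈ gnbr (SimpleGraph.induce {v : Fin n | 2 ≤ (v : ℕ)} (SimpleGraph.pathGraph n))
        {x | (x : Fin n) ∈ C} (S[k]'hk) ∧
      ∀ j (hj : j < k),
        w ∉ gnbr (SimpleGraph.induce {v : Fin n | 2 ≤ (v : ℕ)} (SimpleGraph.pathGraph n))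
          {x | (x : Fin n) ∈ C} (S[j]'(hj.trans hk)) := by
    intro k hk
    rcases Nat.eq_zero_or_pos k with rfl | hkpos
    · -- first element: its gnbr is nonempty
      set x := S[0]'hk with hx
      by_cases hxC : x ∈ ({y | (y : Fin n) ∈ C} :
          Set ({v : Fin n | 2 ≤ (v : ℕ)} : Set (Fin n)))
      · exact ⟨x, Or.inr ⟨hxC, rfl⟩, fun j hj => absurd hj (Nat.not_lt_zero j)⟩
      · have hx2 : 2 ≤ ((x : Fin n) : ℕ) := x.2
        have hxn : ((x : Fin n) : ℕ) < n := (x : Fin n).2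
        by_cases hlt : ((x : Fin n) : ℕ) + 1 < n
        · refine ⟨⟨⟨(x : Fin n) + 1, hlt⟩, by simp only [Set.mem_setOf_eq, Fin.val_mk]; omega⟩,
            Or.inl ?_, fun j hj => absurd hj (Nat.not_lt_zero j)⟩
          rw [induce_path_adj, SimpleGraph.pathGraph_adj]
          left; simp only [Fin.val_mk]
        · by_cases h3 : 3 ≤ ((x : Fin n) : ℕ)
          · refine ⟨⟨⟨(x : Fin n) - 1, by omega⟩, by simp only [Set.mem_setOf_eq, Fin.val_mk]; omega⟩,
              Or.inl ?_, fun j hj => absurd hj (Nat.not_lt_zero j)⟩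
            rw [induce_path_adj, SimpleGraph.pathGraph_adj]
            right; simp only [Fin.val_mk]; omega
          · exfalso
            obtain ⟨v, hv, hvg⟩ := hSdom x
            have hveq : v = x := by
              have h2v : 2 ≤ ((v : Fin n) : ℕ) := v.2
              have hvn : ((v : Fin n) : ℕ) < n := (v : Fin n).2
              apply Subtype.ext; apply Fin.ext; omega
            rw [hveq] at hvg
            rcases hvg with h | ⟨hc, -⟩
            · exact (SimpleGraph.irrefl _) h
            · exact hxC hc
    · obtain ⟨w, hw⟩ := hSlegal.2 k hk hkpos
      refine ⟨w, by simpa [List.get_eq_getElem] using hw.1, ?_⟩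
      intro j hj hmem
      apply hw.2
      rw [Set.mem_iUnion]
      exact ⟨⟨j, hj⟩, by simpa [List.get_eq_getElem] using hmem⟩
  refine ⟨⟨?_, ?_⟩, ?_, ?_⟩
  · -- Nodup
    refine List.Nodup.cons ?_ ?_
    · intro h
      rcases List.mem_append.mp h with h | h
      · have := hmemM _ h; simp at this
      · simp only [List.mem_singleton] at h
        have := congrArg Fin.val h; simp at this
    · rw [List.nodup_append]
      refine ⟨hSlegal.1.map Subtype.val_injective, List.nodup_singleton _, ?_⟩
      intro a ha b hb hab
      simp only [List.mem_singleton] at hb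
      subst hb hab
      have := hmemM _ ha; simp at this
  · -- legality condition
    intro i hi hpos
    obtain ⟨k, rfl⟩ : ∃ k, i = k + 1 := ⟨i - 1, by omega⟩
    have hilen : k + 1 < (S.map Subtype.val).length + 2 := by
      simpa using hi
    simp only [List.get_eq_getElem, List.getElem_cons_succ]
    rcases Nat.lt_or_ge k S.length with hkS | hkS
    · -- an element of S
      obtain ⟨w, hw1, hw2⟩ := hwit k hkS
      have hget : (S.map Subtype.val ++ [(⟨1, by omega⟩ : Fin n)])[k]'(by simp; omega)
          = (S[k]'hkS : Fin n) := by
        rw [List.getElem_append_left (by simpa using hkS), List.getElem_map]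
      refine ⟨(w : Fin n), ?_, ?_⟩
      · rw [hget]; exact gnbr_ind_mem.mp hw1
      · simp only [Set.mem_iUnion, not_exists]
        rintro ⟨jv, hjlt⟩ hjmem
        rcases jv with _ | m
        · simp only [List.getElem_cons_zero] at hjmem
          exact hnot0 _ w.2 hjmem
        · have hmS : m < S.length := by omega
          simp only [List.getElem_cons_succ] at hjmem
          rw [List.getElem_append_left (by simpa using hmS), List.getElem_map] at hjmem
          exact hw2 m (by omega) (gnbr_ind_mem.mpr hjmem)
    · -- the last element (vertex 1)
      have hkM : k = (S.map Subtype.val).length := by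
        simp only [List.length_map]; omega
      have hget : (S.map Subtype.val ++ [(⟨1, by omega⟩ : Fin n)])[k]'(by simpa using hilen)
          = (⟨1, by omega⟩ : Fin n) := by
        rw [List.getElem_concat_length]
        exact hkM
      refine ⟨⟨0, by omega⟩, ?_, ?_⟩
      · rw [hget, gnbr_path_mem]
        left; right; simp
      · simp only [Set.mem_iUnion, not_exists]
        rintro ⟨jv, hjlt⟩ hjmem
        rcases jv with _ | m
        · simp only [List.getElem_cons_zero] at hjmem
          rw [gnbr_path_mem] at hjmem
          rcases hjmem with (h | h) | ⟨hc, -⟩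
          · simp at h
          · simp at h
          · exact h1 hc
        · have hmS : m < S.length := by omega
          simp only [List.getElem_cons_succ] at hjmem
          rw [List.getElem_append_left (by simpa using hmS), List.getElem_map] at hjmem
          exact hnotS _ (S[m]'hmS).2 hjmem
  · -- dominating
    intro u
    rcases lt_or_ge (u : ℕ) 2 with hu | hu
    · have : (u : ℕ) = 0 ∨ (u : ℕ) = 1 := by omega
      rcases this with h | h
      · refine ⟨⟨1, by omega⟩, ?_, ?_⟩
        · simp
        · rw [gnbr_path_mem]; left; right; simp [h]
      · refine ⟨⟨0, by omega⟩, List.mem_cons_self, ?_⟩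
        rw [gnbr_path_mem]; left; left; simp [h]
    · obtain ⟨v, hv, hvg⟩ := hSdom ⟨u, hu⟩
      refine ⟨(v : Fin n), ?_, gnbr_ind_mem.mp hvg⟩
      exact List.mem_cons_of_mem _ (List.mem_append_left _ (List.mem_map_of_mem hv))
  · simp only [List.length_cons, List.length_append, List.length_map,
      List.length_singleton, List.length_nil, hSlen]
    omega
end

section
/- For the web graph G = W_n^k with C = V(G), the general Grundy domination number satisfies γ_gr(W_n^k; V) = n − 2k. -/
/-- The web graph `W_n^k` on vertices `ZMod n`: `i ~ j` iff their circular distance is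
between `1` and `k`. -/
def webGraph (n k : ℕ) : SimpleGraph (ZMod n) :=
  SimpleGraph.fromRel (fun i j => (i - j).val ≤ k)


lemma mem_gnbr_iff (n k : ℕ) [NeZero n] {u v : ZMod n} :
    u ∈ gnbr (webGraph n k) (Set.univ : Set (ZMod n)) v ↔
      (v - u).val ≤ k ∨ (u - v).val ≤ k := by
  unfold gnbr webGraph
  simp only [Set.mem_setOf_eq, SimpleGraph.fromRel_adj, Set.mem_univ, true_and]
  constructor
  · rintro (⟨_, h⟩ | rfl)
    · exact h
    · simp
  · intro h
    by_cases hv : u = v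
    · exact Or.inr hv
    · exact Or.inl ⟨fun e => hv e.symm, h⟩

lemma gnbr_card (n k : ℕ) [NeZero n] (hnk : 2 * (k + 1) ≤ n) (v : ZMod n) :
    ∃ s : Finset (ZMod n), s.card = 2 * k + 1 ∧
      ∀ u, u ∈ s ↔ u ∈ gnbr (webGraph n k) (Set.univ : Set (ZMod n)) v := by
  set f : Fin (2 * k + 1) → ZMod n := fun j => v + (j : ℕ) - (k : ℕ) with hf
  have hinj : Function.Injective f := by
    intro j j' h
    have h2 : ((j : ℕ) : ZMod n) = ((j' : ℕ) : ZMod n) := by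
      have := h; simp only [hf] at this
      have : ((j : ℕ) : ZMod n) - (k : ℕ) = ((j' : ℕ) : ZMod n) - (k : ℕ) := by
        have := congrArg (fun x => x - v) this; simpa [add_sub_assoc, add_sub_cancel_left] using this
      linear_combination this
    have hj : (j : ℕ) < n := by omega
    have hj' : (j' : ℕ) < n := by omega
    have := congrArg ZMod.val h2
    rw [ZMod.val_cast_of_lt hj, ZMod.val_cast_of_lt hj'] at this
    exact Fin.ext this
  refine ⟨Finset.image f Finset.univ, ?_, ?_⟩
  · rw [Finset.card_image_of_injective _ hinj, Finset.card_univ, Fintype.card_fin]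
  · intro u
    rw [mem_gnbr_iff]
    constructor
    · intro hu
      simp only [Finset.mem_image, Finset.mem_univ, true_and] at hu
      obtain ⟨j, rfl⟩ := hu
      by_cases hjk : (j : ℕ) ≤ k
      · left
        have : v - f j = ((k - (j : ℕ) : ℕ) : ZMod n) := by
          push_cast [hjk, hf]; ring
        rw [this, ZMod.val_cast_of_lt (by omega)]
        omega
      · right
        have : f j - v = (((j : ℕ) - k : ℕ) : ZMod n) := by
          push_cast [le_of_not_ge hjk, hf]; ring
        rw [this, ZMod.val_cast_of_lt (by omega)]
        have := j.2; omega
    · intro hu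
      simp only [Finset.mem_image, Finset.mem_univ, true_and]
      rcases hu with hd | hd
      · refine ⟨⟨k - (v - u).val, by omega⟩, ?_⟩
        simp only [hf]
        have h1 : ((k - (v - u).val : ℕ) : ZMod n) = (k : ℕ) - ((v - u).val : ℕ) := by
          push_cast [hd]; ring
        rw [h1, ZMod.natCast_val, ZMod.cast_id]
        ring
      · refine ⟨⟨k + (u - v).val, by omega⟩, ?_⟩
        simp only [hf]
        push_cast
        rw [ZMod.natCast_val, ZMod.cast_id]
        ring

lemma legal_le (n k : ℕ) [NeZero n] (hnk : 2 * (k + 1) ≤ n) (l : List (ZMod n))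
    (hl : Legal (webGraph n k) (Set.univ : Set (ZMod n)) l) : l.length ≤ n - 2 * k := by
  by_cases hlen : l.length ≤ 1
  · omega
  · push_neg at hlen
    set i := l.length - 1 with hi
    have hilt : i < l.length := by omega
    obtain ⟨u, hu1, hu2⟩ := hl.2 i hilt (by omega)
    -- all earlier vertices avoid N[u]
    obtain ⟨s, hscard, hsmem⟩ := gnbr_card n k hnk u
    set g : Fin i → ZMod n := fun j => l.get ⟨j, lt_trans j.2 hilt⟩ with hg
    have hginj : Function.Injective g := by
      intro a b h
      have h2 := List.nodup_iff_injective_get.mp hl.1 h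
      have h3 : (a : ℕ) = (b : ℕ) := by simpa using h2
      exact Fin.ext h3
    have hsub : Finset.image g Finset.univ ⊆ sᶜ := by
      intro x hx
      simp only [Finset.mem_image, Finset.mem_univ, true_and] at hx
      obtain ⟨j, rfl⟩ := hx
      simp only [Finset.mem_compl]
      intro hxs
      rw [hsmem, mem_gnbr_iff] at hxs
      apply hu2
      simp only [Set.mem_iUnion]
      exact ⟨j, (mem_gnbr_iff n k).mpr (Or.symm hxs)⟩
    have hcard : i ≤ n - (2 * k + 1) := by
      have h1 : (Finset.image g Finset.univ).card = i := by
        rw [Finset.card_image_of_injective _ hginj, Finset.card_univ, Fintype.card_fin]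
      have h2 := Finset.card_le_card hsub
      rw [h1, Finset.card_compl, hscard] at h2
      simpa [ZMod.card] using h2
    omega

lemma legal_exists (n k : ℕ) [NeZero n] (hk : 1 ≤ k) (hnk : 2 * (k + 1) ≤ n) :
    ∃ l : List (ZMod n), Legal (webGraph n k) (Set.univ : Set (ZMod n)) l ∧
      l.length = n - 2 * k := by
  refine ⟨(List.range (n - 2 * k)).map (fun i : ℕ => (i : ZMod n)), ⟨?_, ?_⟩, by simp⟩
  · refine List.Nodup.map_on ?_ List.nodup_range
    intro x hx y hy hxy
    rw [List.mem_range] at hx hy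
    have := congrArg ZMod.val hxy
    rwa [ZMod.val_cast_of_lt (by omega), ZMod.val_cast_of_lt (by omega)] at this
  · intro i hi hipos
    simp only [List.length_map, List.length_range] at hi
    have hget : ∀ (m : ℕ) (hm : m < ((List.range (n - 2 * k)).map
        (fun i : ℕ => (i : ZMod n))).length),
        ((List.range (n - 2 * k)).map (fun i : ℕ => (i : ZMod n))).get ⟨m, hm⟩
          = (m : ZMod n) := by
      intro m hm
      simp
    refine ⟨((i + k : ℕ) : ZMod n), ?_, ?_⟩
    · rw [hget i]
      rw [mem_gnbr_iff]
      right
      have : ((i + k : ℕ) : ZMod n) - (i : ℕ) = ((k : ℕ) : ZMod n) := by push_cast; ring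
      rw [this, ZMod.val_cast_of_lt (by omega)]
    · simp only [Set.mem_iUnion, not_exists]
      intro j
      rw [hget j]
      rw [mem_gnbr_iff]
      push_neg
      have hj : (j : ℕ) < i := j.2
      set d : ℕ := i + k - (j : ℕ) with hd
      have hd1 : k + 1 ≤ d := by omega
      have hd2 : d ≤ n - k - 1 := by omega
      have he : ((i + k : ℕ) : ZMod n) - ((j : ℕ) : ZMod n) = (d : ZMod n) := by
        push_cast [hd, Nat.sub_le_iff_le_add, (by omega : (j : ℕ) ≤ i + k)]
        ring
      have hdval : ((d : ℕ) : ZMod n).val = d := ZMod.val_cast_of_lt (by omega)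
      constructor
      · have hne : ((i + k : ℕ) : ZMod n) - ((j : ℕ) : ZMod n) ≠ 0 := by
          rw [he]; intro h0
          rw [h0] at hdval; simp [ZMod.val_zero] at hdval; omega
        have : ((j : ℕ) : ZMod n) - ((i + k : ℕ) : ZMod n)
            = -(((i + k : ℕ) : ZMod n) - ((j : ℕ) : ZMod n)) := by ring
        rw [this, ZMod.neg_val, if_neg hne, he, hdval]
        omega
      · rw [he, hdval]; omega

theorem stmt10 (n k : ℕ) [NeZero n] (hk : 1 ≤ k) (hnk : 2 * (k + 1) ≤ n) :
    grundy (webGraph n k) (Set.univ : Set (ZMod n)) = n - 2 * k := by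
  obtain ⟨l, hl, hlen⟩ := legal_exists n k hk hnk
  have hmem : (n - 2 * k) ∈ {m | ∃ l : List (ZMod n),
      Legal (webGraph n k) (Set.univ : Set (ZMod n)) l ∧ l.length = m} := ⟨l, hl, hlen⟩
  have hub : ∀ m ∈ {m | ∃ l : List (ZMod n),
      Legal (webGraph n k) (Set.univ : Set (ZMod n)) l ∧ l.length = m}, m ≤ n - 2 * k := by
    rintro m ⟨l', hl', rfl⟩
    exact legal_le n k hnk l' hl'
  unfold grundy
  exact le_antisymm (csSup_le ⟨_, hmem⟩ hub) (le_csSup ⟨n - 2 * k, hub⟩ hmem)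
end

section
/- If C is a good configuration for the path P_n, then there exists a legal dominating sequence of P_n;C of length n (i.e., using every vertex). -/
lemma gconf_congr : ∀ n (C D : Set ℕ), (∀ i, 1 ≤ i → i ≤ n → (i ∈ C ↔ i ∈ D)) →
    gconf n C → gconf n D := by
  intro n
  induction n using Nat.strong_induction_on with
  | _ n ih =>
    match n with
    | 0 => intro C D _ h; exact h.elim
    | 1 =>
      intro C D h hg
      rw [gconf] at hg ⊢
      exact (h 1 le_rfl le_rfl).mp hg
    | 2 =>
      intro C D h hg
      rw [gconf] at hg ⊢
      rintro ⟨h1, h2⟩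
      exact hg ⟨(h 1 (by omega) (by omega)).mpr h1, (h 2 (by omega) (by omega)).mpr h2⟩
    | (m+3) =>
      intro C D h hg
      rw [gconf] at hg ⊢
      rcases hg with ⟨h1, h2⟩ | ⟨h1, h2⟩
      · exact Or.inl ⟨fun hc => h1 ((h 1 (by omega) (by omega)).mpr hc),
          ih (m+1) (by omega) _ _ (fun i hi1 hi2 => h (i+2) (by omega) (by omega)) h2⟩
      · exact Or.inr ⟨fun hc => h1 ((h (m+3) (by omega) (by omega)).mpr hc),
          ih (m+1) (by omega) _ _ (fun i hi1 hi2 => h i hi1 (by omega)) h2⟩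

lemma extend (n : ℕ) (C : Set (Fin (n+3))) (C' : Set (Fin (n+1)))
    (f : Fin (n+1) → Fin (n+3)) (a b : Fin (n+3))
    (hinj : Function.Injective f)
    (hab : a ≠ b)
    (haf : ∀ v, a ≠ f v) (hbf : ∀ v, b ≠ f v)
    (hcover : ∀ u : Fin (n+3), u = a ∨ u = b ∨ ∃ v, f v = u)
    (hadj : ∀ u v, (SimpleGraph.pathGraph (n+3)).Adj (f u) (f v) ↔
      (SimpleGraph.pathGraph (n+1)).Adj u v)
    (hC : ∀ v, f v ∈ C ↔ v ∈ C')
    (hga : gnbr (SimpleGraph.pathGraph (n+3)) C a = {b})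
    (hgb : a ∈ gnbr (SimpleGraph.pathGraph (n+3)) C b)
    (hgfa : ∀ v, a ∉ gnbr (SimpleGraph.pathGraph (n+3)) C (f v))
    (l : List (Fin (n+1))) (hleg : Legal (SimpleGraph.pathGraph (n+1)) C' l)
    (hdom : Dominating (SimpleGraph.pathGraph (n+1)) C' l) (hlen : l.length = n+1) :
    ∃ L : List (Fin (n+3)), Legal (SimpleGraph.pathGraph (n+3)) C L ∧
      Dominating (SimpleGraph.pathGraph (n+3)) C L ∧ L.length = n+3 := by
  have hmap : ∀ v x, f x ∈ gnbr (SimpleGraph.pathGraph (n+3)) C (f v) ↔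
      x ∈ gnbr (SimpleGraph.pathGraph (n+1)) C' v := by
    intro v x
    constructor
    · rintro (h | ⟨h1, h2⟩)
      · exact Or.inl ((hadj v x).mp h)
      · exact Or.inr ⟨(hC v).mp h1, hinj h2⟩
    · rintro (h | ⟨h1, h2⟩)
      · exact Or.inl ((hadj v x).mpr h)
      · exact Or.inr ⟨(hC v).mpr h1, congrArg f h2⟩
  -- every vertex of the small path has nonempty generalized neighborhood
  have hne : ∀ v : Fin (n+1), (gnbr (SimpleGraph.pathGraph (n+1)) C' v).Nonempty := by
    intro v
    rcases Nat.eq_zero_or_pos n with rfl | hn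
    · obtain ⟨w, _, hw⟩ := hdom v
      have hwv : w = v := Fin.ext (by omega)
      exact ⟨v, by rwa [hwv] at hw⟩
    · by_cases hv : v.val < n
      · exact ⟨⟨v.val+1, by omega⟩, Or.inl (SimpleGraph.pathGraph_adj.mpr (Or.inl rfl))⟩
      · refine ⟨⟨v.val-1, by omega⟩, Or.inl (SimpleGraph.pathGraph_adj.mpr (Or.inr ?_))⟩
        have := v.isLt
        show v.val - 1 + 1 = v.val
        omega
  set L : List (Fin (n+3)) := a :: (l.map f ++ [b]) with hL
  have hmlen : (l.map f).length = n + 1 := by simp [hlen]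
  have hLlen : L.length = n + 3 := by simp [hL, hlen]
  -- getters
  have hget0 : ∀ (h : 0 < L.length), L.get ⟨0, h⟩ = a := fun _ => rfl
  have hgetmid : ∀ (j : ℕ) (hj : j < n+1) (h : j+1 < L.length),
      L.get ⟨j+1, h⟩ = f (l.get ⟨j, by omega⟩) := by
    intro j hj h
    simp only [hL, List.get_eq_getElem, List.getElem_cons_succ]
    rw [List.getElem_append_left (by omega)]
    simp
  have hgetmid' : ∀ (kk : ℕ) (h1 : 0 < kk) (h2 : kk < n+2) (h : kk < L.length),
      L.get ⟨kk, h⟩ = f (l.get ⟨kk-1, by omega⟩) := by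
    intro kk h1 h2 h
    obtain ⟨j, rfl⟩ : ∃ j, kk = j + 1 := ⟨kk - 1, by omega⟩
    rw [hgetmid j (by omega) h]
    congr 1
  have hgetlast : ∀ (h : n+2 < L.length), L.get ⟨n+2, h⟩ = b := by
    intro h
    simp only [hL, List.get_eq_getElem, List.getElem_cons_succ]
    rw [List.getElem_append_right (by omega)]
    simp [hmlen]
  have hmemb : b ∈ L := by simp [hL]
  refine ⟨L, ⟨?_, ?_⟩, ?_, hLlen⟩
  · -- Nodup
    simp only [hL, List.nodup_cons, List.mem_append, List.mem_map, List.mem_singleton]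
    refine ⟨?_, ?_⟩
    · rintro (⟨v, _, hv⟩ | rfl)
      · exact haf v hv.symm
      · exact hab rfl
    · rw [List.nodup_append]
      refine ⟨hleg.1.map hinj, List.nodup_singleton b, ?_⟩
      intro x hx
      simp only [List.mem_singleton]
      rintro _ rfl hxb
      obtain ⟨v, _, hv⟩ := List.mem_map.mp hx
      exact hbf v (hxb ▸ hv.symm)
  · -- legality condition
    intro i hi h0
    have hi' : i < n + 3 := by rwa [hLlen] at hi
    rcases Nat.lt_or_ge i (n+2) with hcase | hcase
    · -- middle elements: i = j+1 with j < n+1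
      obtain ⟨j, rfl⟩ : ∃ j, i = j + 1 := ⟨i - 1, by omega⟩
      have hj : j < n + 1 := by omega
      have hjl : j < l.length := by omega
      -- get a witness x in the small graph
      have hx : ∃ x, x ∈ gnbr (SimpleGraph.pathGraph (n+1)) C' (l.get ⟨j, hjl⟩) ∧
          ∀ (k : ℕ) (hk : k < j), x ∉ gnbr (SimpleGraph.pathGraph (n+1)) C' (l.get ⟨k, by omega⟩) := by
        rcases Nat.eq_zero_or_pos j with rfl | hjpos
        · obtain ⟨x, hx⟩ := hne (l.get ⟨0, hjl⟩)
          exact ⟨x, hx, fun k hk => by omega⟩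
        · obtain ⟨x, hx1, hx2⟩ := hleg.2 j hjl hjpos
          refine ⟨x, hx1, fun k hk hmem => ?_⟩
          exact hx2 (Set.mem_iUnion.mpr ⟨⟨k, hk⟩, hmem⟩)
      obtain ⟨x, hx1, hx2⟩ := hx
      refine ⟨f x, ?_, ?_⟩
      · rw [hgetmid j hj hi]
        exact (hmap _ x).mpr hx1
      · intro hmem
        obtain ⟨k, hs⟩ := Set.mem_iUnion.mp hmem
        have hkk := k.isLt
        rcases Nat.eq_zero_or_pos k.val with hk0 | hkpos
        · rw [show (⟨(k : ℕ), lt_trans k.2 hi⟩ : Fin L.length) = ⟨0, by omega⟩ from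
            Fin.ext hk0, hget0] at hs
          rw [hga] at hs
          exact hbf x (Set.mem_singleton_iff.mp hs).symm
        · rw [hgetmid' k.val hkpos (by omega) _] at hs
          exact hx2 (k.val - 1) (by omega) ((hmap _ x).mp hs)
    · -- last element: i = n+2
      have : i = n + 2 := by omega
      subst this
      refine ⟨a, ?_, ?_⟩
      · rw [hgetlast hi]; exact hgb
      · intro hmem
        obtain ⟨k, hs⟩ := Set.mem_iUnion.mp hmem
        have hkk := k.isLt
        rcases Nat.eq_zero_or_pos k.val with hk0 | hkpos
        · rw [show (⟨(k : ℕ), lt_trans k.2 hi⟩ : Fin L.length) = ⟨0, by omega⟩ from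
            Fin.ext hk0, hget0] at hs
          rw [hga] at hs
          exact hab (Set.mem_singleton_iff.mp hs)
        · rw [hgetmid' k.val hkpos (by omega) _] at hs
          exact hgfa _ hs
  · -- dominating
    intro u
    rcases hcover u with rfl | rfl | ⟨w, rfl⟩
    · exact ⟨b, hmemb, hgb⟩
    · exact ⟨a, by simp [hL], by rw [hga]; rfl⟩
    · obtain ⟨v, hv, hw⟩ := hdom w
      refine ⟨f v, ?_, (hmap v w).mpr hw⟩
      simp only [hL, List.mem_cons, List.mem_append, List.mem_map]
      exact Or.inr (Or.inl ⟨v, hv, rfl⟩)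

theorem stmt13 (n : ℕ) (C : Set (Fin n))
    (hgc : gconf n ((fun v : Fin n => (v : ℕ) + 1) '' C)) :
    ∃ l : List (Fin n), Legal (SimpleGraph.pathGraph n) C l ∧
      Dominating (SimpleGraph.pathGraph n) C l ∧ l.length = n := by
  induction n using Nat.strong_induction_on with
  | _ n ih =>
    match n, C, hgc, ih with
    | 0, C, hgc, ih => exact hgc.elim
    | 1, C, hgc, ih =>
      rw [gconf] at hgc
      obtain ⟨v, hv, hv1⟩ := hgc
      have h0 : (0 : Fin 1) ∈ C := by
        have hv0 : v = 0 := Fin.ext (by omega)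
        rwa [hv0] at hv
      refine ⟨[0], ⟨by simp, ?_⟩, ?_, rfl⟩
      · intro i hi hpos
        simp only [List.length_singleton] at hi
        omega
      · intro u
        exact ⟨0, by simp, Or.inr ⟨h0, Fin.ext (by omega)⟩⟩
    | 2, C, hgc, ih =>
      rw [gconf] at hgc
      by_cases h1 : (1 : Fin 2) ∈ C
      · have h0 : (0 : Fin 2) ∉ C := fun h0 => hgc ⟨⟨0, h0, rfl⟩, ⟨1, h1, rfl⟩⟩
        refine ⟨[0, 1], ⟨by simp, ?_⟩, ?_, rfl⟩
        · intro i hi hpos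
          have hi1 : i = 1 := by simp at hi; omega
          subst hi1
          refine ⟨0, Or.inl (SimpleGraph.pathGraph_adj.mpr (Or.inr rfl)), ?_⟩
          intro hmem
          obtain ⟨k, hs⟩ := Set.mem_iUnion.mp hmem
          have hk0 : k = (0 : Fin 1) := Fin.ext (by omega)
          subst hk0
          rcases hs with h | ⟨hc, _⟩
          · rw [SimpleGraph.pathGraph_adj] at h
            simp at h
          · exact h0 hc
        · intro u
          fin_cases u
          · exact ⟨1, by simp, Or.inl (SimpleGraph.pathGraph_adj.mpr (Or.inr rfl))⟩
          · exact ⟨0, by simp, Or.inl (SimpleGraph.pathGraph_adj.mpr (Or.inl rfl))⟩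
      · refine ⟨[1, 0], ⟨by simp, ?_⟩, ?_, rfl⟩
        · intro i hi hpos
          have hi1 : i = 1 := by simp at hi; omega
          subst hi1
          refine ⟨1, Or.inl (SimpleGraph.pathGraph_adj.mpr (Or.inl rfl)), ?_⟩
          intro hmem
          obtain ⟨k, hs⟩ := Set.mem_iUnion.mp hmem
          have hk0 : k = (0 : Fin 1) := Fin.ext (by omega)
          subst hk0
          rcases hs with h | ⟨hc, _⟩
          · rw [SimpleGraph.pathGraph_adj] at h
            simp at h
          · exact h1 hc
        · intro u
          fin_cases u
          · exact ⟨1, by simp, Or.inl (SimpleGraph.pathGraph_adj.mpr (Or.inr rfl))⟩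
          · exact ⟨0, by simp, Or.inl (SimpleGraph.pathGraph_adj.mpr (Or.inl rfl))⟩
    | (m+3), C, hgc, ih =>
      rw [gconf] at hgc
      rcases hgc with ⟨h1, h2⟩ | ⟨h1, h2⟩
      · -- first vertex not in C : shift embedding
        have h0C : (⟨0, by omega⟩ : Fin (m+3)) ∉ C := fun h => h1 ⟨_, h, rfl⟩
        set C' : Set (Fin (m+1)) := {v | (⟨v.val+2, by omega⟩ : Fin (m+3)) ∈ C} with hC'
        have hg' : gconf (m+1) ((fun v : Fin (m+1) => (v : ℕ) + 1) '' C') := by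
          refine gconf_congr (m+1) _ _ ?_ h2
          intro i hi1 hi2
          constructor
          · rintro ⟨v, hv, hv1⟩
            have hv1' : (v : ℕ) + 1 = i + 2 := hv1
            refine ⟨⟨i-1, by omega⟩, ?_, show i - 1 + 1 = i by omega⟩
            show (⟨i-1+2, by omega⟩ : Fin (m+3)) ∈ C
            have hveq : (⟨i-1+2, by omega⟩ : Fin (m+3)) = v :=
              Fin.ext (show i - 1 + 2 = (v : ℕ) by omega)
            rwa [hveq]
          · rintro ⟨w, hw, hw1⟩
            have hw1' : (w : ℕ) + 1 = i := hw1
            exact ⟨⟨w.val+2, by omega⟩, hw, show w.val + 2 + 1 = i + 2 by omega⟩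
        obtain ⟨l, hleg, hdom, hlen⟩ := ih (m+1) (by omega) C' hg'
        refine extend m C C' (fun v => ⟨v.val+2, by omega⟩) ⟨0, by omega⟩ ⟨1, by omega⟩
          ?_ ?_ ?_ ?_ ?_ ?_ (fun v => Iff.rfl) ?_ ?_ ?_ l hleg hdom hlen
        · intro u v h
          have h' : u.val + 2 = v.val + 2 := congrArg Fin.val h
          exact Fin.ext (by omega)
        · intro h
          have h' := congrArg Fin.val h
          simp at h'
        · intro v h
          have h' : (0 : ℕ) = v.val + 2 := congrArg Fin.val h
          omega
        · intro v h
          have h' : (1 : ℕ) = v.val + 2 := congrArg Fin.val h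
          omega
        · intro u
          have hu := u.isLt
          by_cases h0 : u.val = 0
          · exact Or.inl (Fin.ext h0)
          · by_cases hone : u.val = 1
            · exact Or.inr (Or.inl (Fin.ext hone))
            · exact Or.inr (Or.inr ⟨⟨u.val-2, by omega⟩, Fin.ext (show u.val - 2 + 2 = u.val by omega)⟩)
        · intro u v
          rw [SimpleGraph.pathGraph_adj, SimpleGraph.pathGraph_adj]
          show u.val + 2 + 1 = v.val + 2 ∨ v.val + 2 + 1 = u.val + 2 ↔ _
          omega
        · ext u
          constructor
          · rintro (h | ⟨hc, _⟩)
            · rw [SimpleGraph.pathGraph_adj] at h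
              have hu := u.isLt
              exact Fin.ext (show u.val = 1 by
                have h' : 0 + 1 = u.val ∨ u.val + 1 = 0 := h
                omega)
            · exact absurd hc h0C
          · rintro rfl
            exact Or.inl (SimpleGraph.pathGraph_adj.mpr (Or.inl rfl))
        · exact Or.inl (SimpleGraph.pathGraph_adj.mpr (Or.inr rfl))
        · intro v
          rintro (h | ⟨_, h⟩)
          · rw [SimpleGraph.pathGraph_adj] at h
            have h' : v.val + 2 + 1 = 0 ∨ 0 + 1 = v.val + 2 := h
            omega
          · have h' : (0 : ℕ) = v.val + 2 := congrArg Fin.val h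
            omega
      · -- last vertex not in C : initial-segment embedding
        have hlC : (⟨m+2, by omega⟩ : Fin (m+3)) ∉ C := fun h => h1 ⟨_, h, rfl⟩
        set C' : Set (Fin (m+1)) := {v | (⟨v.val, by omega⟩ : Fin (m+3)) ∈ C} with hC'
        have hg' : gconf (m+1) ((fun v : Fin (m+1) => (v : ℕ) + 1) '' C') := by
          refine gconf_congr (m+1) _ _ ?_ h2
          intro i hi1 hi2
          constructor
          · rintro ⟨v, hv, hv1⟩
            have hv1' : (v : ℕ) + 1 = i := hv1
            refine ⟨⟨i-1, by omega⟩, ?_, show i - 1 + 1 = i by omega⟩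
            show (⟨i-1, by omega⟩ : Fin (m+3)) ∈ C
            have hveq : (⟨i-1, by omega⟩ : Fin (m+3)) = v :=
              Fin.ext (show i - 1 = (v : ℕ) by omega)
            rwa [hveq]
          · rintro ⟨w, hw, hw1⟩
            have hw1' : (w : ℕ) + 1 = i := hw1
            exact ⟨⟨w.val, by omega⟩, hw, show w.val + 1 = i by omega⟩
        obtain ⟨l, hleg, hdom, hlen⟩ := ih (m+1) (by omega) C' hg'
        refine extend m C C' (fun v => ⟨v.val, by omega⟩) ⟨m+2, by omega⟩ ⟨m+1, by omega⟩
          ?_ ?_ ?_ ?_ ?_ ?_ (fun v => Iff.rfl) ?_ ?_ ?_ l hleg hdom hlen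
        · intro u v h
          have h' := congrArg Fin.val h
          exact Fin.ext h'
        · intro h
          have h' : m + 2 = m + 1 := congrArg Fin.val h
          omega
        · intro v h
          have h' : m + 2 = v.val := congrArg Fin.val h
          have := v.isLt
          omega
        · intro v h
          have h' : m + 1 = v.val := congrArg Fin.val h
          have := v.isLt
          omega
        · intro u
          have hu := u.isLt
          by_cases h0 : u.val = m + 2
          · exact Or.inl (Fin.ext h0)
          · by_cases hone : u.val = m + 1
            · exact Or.inr (Or.inl (Fin.ext hone))
            · exact Or.inr (Or.inr ⟨⟨u.val, by omega⟩, Fin.ext rfl⟩)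
        · intro u v
          rw [SimpleGraph.pathGraph_adj, SimpleGraph.pathGraph_adj]
        · ext u
          constructor
          · rintro (h | ⟨hc, _⟩)
            · rw [SimpleGraph.pathGraph_adj] at h
              have hu := u.isLt
              exact Fin.ext (show u.val = m + 1 by
                have h' : m + 2 + 1 = u.val ∨ u.val + 1 = m + 2 := h
                omega)
            · exact absurd hc hlC
          · rintro rfl
            exact Or.inl (SimpleGraph.pathGraph_adj.mpr (Or.inr rfl))
        · exact Or.inl (SimpleGraph.pathGraph_adj.mpr (Or.inl rfl))
        · intro v
          rintro (h | ⟨_, h⟩)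
          · rw [SimpleGraph.pathGraph_adj] at h
            have hv := v.isLt
            have h' : v.val + 1 = m + 2 ∨ m + 2 + 1 = v.val := h
            omega
          · have h' : m + 2 = v.val := congrArg Fin.val h
            have := v.isLt
            omega
end

section
/- If both endpoints of the path P_n (n ≥ 2) belong to C, then every legal sequence of P_n;C has length at most n − 1, and γ_gr(P_n;C) = n − 1 when n ≥ 3. -/
lemma two_elts (n : ℕ) (hn : 2 ≤ n) (C : Set (Fin n))
    (h0 : (⟨0, Nat.lt_of_lt_of_le (by norm_num) hn⟩ : Fin n) ∈ C)
    (h1 : (⟨n - 1, Nat.sub_lt (Nat.lt_of_lt_of_le (by norm_num) hn) Nat.one_pos⟩ : Fin n) ∈ C)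
    (v : Fin n) : ∃ a b : Fin n, a ∈ gnbr (SimpleGraph.pathGraph n) C v ∧
      b ∈ gnbr (SimpleGraph.pathGraph n) C v ∧ a ≠ b := by
  by_cases hv0 : v.val = 0
  · refine ⟨v, ⟨1, by omega⟩, Or.inr ⟨?_, rfl⟩, Or.inl ?_, ?_⟩
    · have : v = (⟨0, by omega⟩ : Fin n) := Fin.ext hv0
      rw [this]; exact h0
    · rw [SimpleGraph.pathGraph_adj]; left; simpa [hv0]
    · intro h; apply congrArg Fin.val at h; simp [hv0] at h
  · by_cases hvn : v.val = n - 1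
    · refine ⟨v, ⟨n - 2, by omega⟩, Or.inr ⟨?_, rfl⟩, Or.inl ?_, ?_⟩
      · have : v = (⟨n - 1, by omega⟩ : Fin n) := Fin.ext hvn
        rw [this]; exact h1
      · rw [SimpleGraph.pathGraph_adj]; right; simp; omega
      · intro h; apply congrArg Fin.val at h; simp at h <;> omega
    · refine ⟨⟨v.val - 1, by omega⟩, ⟨v.val + 1, by omega⟩, Or.inl ?_, Or.inl ?_, ?_⟩
      · rw [SimpleGraph.pathGraph_adj]; right; simp; omega
      · rw [SimpleGraph.pathGraph_adj]; left; simp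
      · intro h; apply congrArg Fin.val at h; simp at h <;> omega

theorem stmt15 (n : ℕ) (hn : 2 ≤ n) (C : Set (Fin n))
    (h0 : (⟨0, by omega⟩ : Fin n) ∈ C) (h1 : (⟨n - 1, by omega⟩ : Fin n) ∈ C) :
    (∀ l : List (Fin n), Legal (SimpleGraph.pathGraph n) C l → l.length ≤ n - 1) ∧
    (3 ≤ n → grundy (SimpleGraph.pathGraph n) C = n - 1) := by
  have upper : ∀ l : List (Fin n), Legal (SimpleGraph.pathGraph n) C l →
      l.length ≤ n - 1 := by
    intro l hl
    set k := l.length with hk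
    rcases Nat.eq_zero_or_pos k with h | hkpos
    · omega
    -- witnesses
    have H : ∀ i (hi : i < k), 0 < i → ∃ x : Fin n,
        x ∈ gnbr (SimpleGraph.pathGraph n) C (l.get ⟨i, hi⟩) ∧
        ∀ j (hj : j < i), x ∉ gnbr (SimpleGraph.pathGraph n) C (l.get ⟨j, lt_trans hj hi⟩) := by
      intro i hi hipos
      obtain ⟨x, hx⟩ := hl.2 i hi hipos
      rw [Set.mem_diff] at hx
      refine ⟨x, hx.1, fun j hj hmem => hx.2 ?_⟩
      rw [Set.mem_iUnion]
      exact ⟨⟨j, hj⟩, hmem⟩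
    choose w hw1 hw2 using H
    obtain ⟨a, b, ha, hb, hab⟩ := two_elts n hn C h0 h1 (l.get ⟨0, hkpos⟩)
    -- injective map Fin (k+1) → Fin n
    have key : k + 1 ≤ n := by
      have : Function.Injective (fun i : Fin (k + 1) =>
          if h : i.val = 0 then a else if h1 : i.val = 1 then b
          else w (i.val - 1) (by omega) (by omega)) := by
        intro i j hij
        simp only at hij
        have wfresh : ∀ m (hm : m < k) (hmpos : 0 < m),
            w m hm hmpos ∉ gnbr (SimpleGraph.pathGraph n) C (l.get ⟨0, hkpos⟩) := by
          intro m hm hmpos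
          exact hw2 m hm hmpos 0 hmpos
        have wne : ∀ m m' (hm : m < k) (hm' : m' < k) (hp : 0 < m) (hp' : 0 < m'),
            m < m' → w m hm hp ≠ w m' hm' hp' := by
          intro m m' hm hm' hp hp' hlt heq
          exact hw2 m' hm' hp' m hlt (heq ▸ hw1 m hm hp)
        by_cases hi0 : i.val = 0
        · by_cases hj0 : j.val = 0
          · exact Fin.ext (by omega)
          · by_cases hj1 : j.val = 1
            · simp [hi0, hj0, hj1, Nat.one_ne_zero] at hij
              exact absurd hij hab
            · simp [hi0, hj0, hj1, dif_pos, dif_neg, Nat.one_ne_zero] at hij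
              exact absurd (hij ▸ ha) (wfresh _ (by omega) (by omega))
        · by_cases hi1 : i.val = 1
          · by_cases hj0 : j.val = 0
            · simp [hi0, hj0, hi1, dif_pos, dif_neg, Nat.one_ne_zero] at hij
              exact absurd hij.symm hab
            · by_cases hj1 : j.val = 1
              · exact Fin.ext (by omega)
              · simp [hi0, hj0, hi1, hj1, dif_pos, dif_neg, Nat.one_ne_zero] at hij
                exact absurd (hij ▸ hb) (wfresh _ (by omega) (by omega))
          · by_cases hj0 : j.val = 0
            · simp [hi0, hj0, hi1, dif_pos, dif_neg, Nat.one_ne_zero] at hij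
              exact absurd (hij.symm ▸ ha) (wfresh _ (by omega) (by omega))
            · by_cases hj1 : j.val = 1
              · simp [hi0, hj0, hi1, hj1, dif_pos, dif_neg, Nat.one_ne_zero] at hij
                exact absurd (hij.symm ▸ hb) (wfresh _ (by omega) (by omega))
              · simp [hi0, hj0, hi1, hj1, dif_neg, Nat.one_ne_zero] at hij
                rcases lt_trichotomy (i.val - 1) (j.val - 1) with h | h | h
                · exact absurd hij (wne _ _ _ _ _ _ h)
                · exact Fin.ext (by omega)
                · exact absurd hij.symm (wne _ _ _ _ _ _ h)
      have := Fintype.card_le_of_injective _ this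
      simpa using this
    omega
  refine ⟨upper, fun hn3 => ?_⟩
  -- lower bound sequence
  set l : List (Fin n) := List.ofFn (fun i : Fin (n - 1) => (⟨n - 1 - i.val, by omega⟩ : Fin n))
    with hldef
  have hlen : l.length = n - 1 := by simp [hldef]
  have hget : ∀ i (hi : i < l.length), l.get ⟨i, hi⟩ = (⟨n - 1 - i, by omega⟩ : Fin n) := by
    intro i hi
    simp [hldef, List.get_ofFn]
  have hleg : Legal (SimpleGraph.pathGraph n) C l := by
    constructor
    · rw [hldef, List.nodup_ofFn]
      intro i j hij
      simp only at hij
      apply congrArg Fin.val at hij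
      simp only at hij
      exact Fin.ext (by omega)
    · intro i hi hipos
      refine ⟨⟨n - 2 - i, by omega⟩, ?_, ?_⟩
      · rw [hget i hi]
        refine Or.inl ?_
        rw [SimpleGraph.pathGraph_adj]
        right; simp; omega
      · rw [Set.mem_iUnion]
        push_neg
        intro j
        rw [hget j.val (lt_trans j.2 hi)]
        rintro (hadj | ⟨-, heq⟩)
        · rw [SimpleGraph.pathGraph_adj] at hadj
          simp only at hadj
          have hj : j.val < i := j.2
          have : i < l.length := hi
          rw [hlen] at this
          omega
        · apply congrArg Fin.val at heq
          simp only at heq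
          have hj : j.val < i := j.2
          have : i < l.length := hi
          rw [hlen] at this
          omega
  have hmem : n - 1 ∈ {k | ∃ l : List (Fin n),
      Legal (SimpleGraph.pathGraph n) C l ∧ l.length = k} := ⟨l, hleg, hlen⟩
  have hbdd : ∀ k ∈ {k | ∃ l : List (Fin n),
      Legal (SimpleGraph.pathGraph n) C l ∧ l.length = k}, k ≤ n - 1 := by
    rintro k ⟨l', hl', rfl⟩
    exact upper l' hl'
  exact le_antisymm (csSup_le ⟨n - 1, hmem⟩ hbdd) (le_csSup ⟨n - 1, hbdd⟩ hmem)
end
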